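/- arXiv:2104.03921 — 4 statements merged into one kernel-verified Lean document; each statement's English description precedes it below -/
import Mathlib

section
/- For every positive integer n, the determinant of the n×n matrix M whose (i,j) entry (1-indexed) is C(i+j-2) + C(i+j-1), where C(m) denotes the m-th Catalan number, equals the Fibonacci number F(2n+1). -/
open Finset Matrix

/-- Ballot numbers: entries of the triangular matrix. -/
noncomputable def bb (i k : ℕ) : ℚ := ((2*i).choose (i+k) : ℚ) - ((2*i).choose (i+k+1) : ℚ)

lemma pascal2 (m a : ℕ) : (((m+2).choose (a+2) : ℚ)) = m.choose a + 2 * m.choose (a+1) + m.choose (a+2) := by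
  have : (m+2).choose (a+2) = m.choose a + 2 * m.choose (a+1) + m.choose (a+2) := by
    rw [show (m+2).choose (a+2) = (m+1).choose (a+1) + (m+1).choose (a+2) from Nat.choose_succ_succ (m+1) (a+1),
        Nat.choose_succ_succ m a, Nat.choose_succ_succ m (a+1)]
    ring
  exact_mod_cast this

lemma bb_rec (j k : ℕ) : bb (j+1) (k+1) = bb j k + 2 * bb j (k+1) + bb j (k+2) := by
  unfold bb
  have q1 := pascal2 (2*j) (j+k)
  have q2 := pascal2 (2*j) (j+k+1)
  simp only [show 2*(j+1) = 2*j+2 from by ring, show j+1+(k+1) = j+k+2 from by omega,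
    show j+k+2+1 = j+k+1+2 from by omega, show j+(k+1) = j+k+1 from by omega,
    show j+k+1+1 = j+k+2 from by omega, show j+(k+2) = j+k+2 from by omega]
  rw [q1, q2]
  ring

lemma bb_zero_rec (j : ℕ) : bb (j+1) 0 = bb j 0 + bb j 1 := by
  unfold bb
  have e1 : (2*(j+1)).choose (j+1+0) = 2 * ((2*j).choose j + (2*j).choose (j+1)) := by
    rw [show 2*(j+1) = (2*j+1)+1 from by ring, show j+1+0 = j+1 from by omega,
      Nat.choose_succ_succ (2*j+1) j]
    have hs : (2*j+1).choose j = (2*j+1).choose (j+1) := by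
      rw [← Nat.choose_symm (by omega : j ≤ 2*j+1)]
      congr 1
      omega
    rw [hs, Nat.choose_succ_succ (2*j) j]
    ring
  have e2 := pascal2 (2*j) j
  rw [e1]
  simp only [show j+1+0+1 = j+2 from by omega, show 2*(j+1) = 2*j+2 from by ring]
  rw [e2]
  push_cast
  simp only [show j+0 = j from by omega, show j+0+1 = j+1 from by omega,
    show j+1+1 = j+2 from by omega]
  ring

lemma bb_vanish {i k : ℕ} (h : i < k) : bb i k = 0 := by
  unfold bb
  rw [Nat.choose_eq_zero_of_lt (by omega), Nat.choose_eq_zero_of_lt (by omega)]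
  simp

lemma bb_diag (i : ℕ) : bb i i = 1 := by
  unfold bb
  rw [show i + i = 2*i from by ring, Nat.choose_self, Nat.choose_eq_zero_of_lt (by omega)]
  simp

lemma bb_catalan (m : ℕ) : bb m 0 = (catalan m : ℚ) := by
  unfold bb
  have hc : ((m:ℚ)+1) * catalan m = (2*m).choose m := by
    exact_mod_cast congrArg (Nat.cast (R := ℚ)) (succ_mul_catalan_eq_centralBinom m)
  have hr : ((2*m).choose (m+1) : ℚ) * (m+1) = ((2*m).choose m : ℚ) * m := by
    have := Nat.choose_succ_right_eq (2*m) m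
    rw [show 2*m - m = m from by omega] at this
    exact_mod_cast this
  have hm1 : ((m:ℚ)+1) ≠ 0 := by positivity
  simp only [show m+0 = m from by omega, show m+0+1 = m+1 from by omega]
  have h2 : ((2*m).choose (m+1) : ℚ) = ((m:ℚ)+1) * catalan m * m / (m+1) := by
    rw [← hc] at hr
    field_simp
    apply mul_right_cancel₀ hm1
    linear_combination hr
  rw [h2, ← hc]
  field_simp
  ring

section
variable (b : ℕ → ℕ → ℚ) (ε : ℕ → ℚ)
variable (h1 : ∀ j k, b (j+1) (k+1) = b j k + 2 * b j (k+1) + b j (k+2))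
variable (h2 : ∀ j, b (j+1) 0 = 2 * b j 0 + b j 1 + ε j)
variable (h3 : ∀ i k, i < k → b i k = 0)
variable (h4 : ∀ i j, ε j * b i 0 = ε i * b j 0)

include h1 h2 h3 h4 in
lemma shift_lemma (i j N : ℕ) (hi : i < N + 1) (hj : j < N + 1) :
    ∑ k ∈ range (N+1), b i k * b (j+1) k = ∑ k ∈ range (N+1), b (i+1) k * b j k := by
  have e1 : ∑ k ∈ range (N+1), b i k * b (j+1) k
      = (∑ k ∈ range N, b i (k+1) * b j k
        + (2 * ∑ k ∈ range N, b i (k+1) * b j (k+1)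
        + ∑ k ∈ range N, b i (k+1) * b j (k+2)))
        + b i 0 * (2 * b j 0 + b j 1 + ε j) := by
    rw [Finset.sum_range_succ' (fun k => b i k * b (j+1) k) N, h2 j]
    congr 1
    calc ∑ k ∈ range N, b i (k+1) * b (j+1) (k+1)
        = ∑ k ∈ range N, (b i (k+1) * b j k
            + (2 * (b i (k+1) * b j (k+1)) + b i (k+1) * b j (k+2))) :=
          Finset.sum_congr rfl fun k _ => by rw [h1 j k]; ring
      _ = _ := by
          rw [Finset.sum_add_distrib, Finset.sum_add_distrib, ← Finset.mul_sum]
  have e2 : ∑ k ∈ range (N+1), b (i+1) k * b j k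
      = (∑ k ∈ range N, b i k * b j (k+1)
        + (2 * ∑ k ∈ range N, b i (k+1) * b j (k+1)
        + ∑ k ∈ range N, b i (k+2) * b j (k+1)))
        + (2 * b i 0 + b i 1 + ε i) * b j 0 := by
    rw [Finset.sum_range_succ' (fun k => b (i+1) k * b j k) N, h2 i]
    congr 1
    calc ∑ k ∈ range N, b (i+1) (k+1) * b j (k+1)
        = ∑ k ∈ range N, (b i k * b j (k+1)
            + (2 * (b i (k+1) * b j (k+1)) + b i (k+2) * b j (k+1))) :=
          Finset.sum_congr rfl fun k _ => by rw [h1 i k]; ring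
      _ = _ := by
          rw [Finset.sum_add_distrib, Finset.sum_add_distrib, ← Finset.mul_sum]
  have eP : ∑ k ∈ range (N+1), b i k * b j (k+1)
      = ∑ k ∈ range N, b i (k+1) * b j (k+2) + b i 0 * b j 1 :=
    Finset.sum_range_succ' (fun k => b i k * b j (k+1)) N
  have eQ : ∑ k ∈ range (N+1), b i (k+1) * b j k
      = ∑ k ∈ range N, b i (k+2) * b j (k+1) + b i 1 * b j 0 :=
    Finset.sum_range_succ' (fun k => b i (k+1) * b j k) N
  have eS1 : ∑ k ∈ range (N+1), b i (k+1) * b j k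
      = ∑ k ∈ range N, b i (k+1) * b j k := by
    rw [Finset.sum_range_succ, h3 i (N+1) (by omega), zero_mul, add_zero]
  have eS1' : ∑ k ∈ range (N+1), b i k * b j (k+1)
      = ∑ k ∈ range N, b i k * b j (k+1) := by
    rw [Finset.sum_range_succ, h3 j (N+1) (by omega), mul_zero, add_zero]
  rw [e1, e2]
  linear_combination eQ - eS1 + eS1' - eP + h4 i j

include h1 h2 h3 h4 in
lemma hankel_eval (N : ℕ) : ∀ j i, i + j < N + 1 →
    ∑ k ∈ range (N+1), b i k * b j k = b (i+j) 0 * b 0 0 := by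
  intro j
  induction j with
  | zero =>
    intro i _
    rw [Finset.sum_eq_single 0]
    · simp
    · intro k _ hk
      rw [h3 0 k (by omega), mul_zero]
    · intro h
      exact absurd (Finset.mem_range.2 (by omega)) h
  | succ j ih =>
    intro i hij
    rw [shift_lemma b ε h1 h2 h3 h4 i j N (by omega) (by omega)]
    rw [ih (i+1) (by omega)]
    congr 2
    omega
end

/-! ### Instantiations of the Hankel evaluation -/

noncomputable def bb' (i k : ℕ) : ℚ := bb i k + bb i (k+1)

lemma bb_h2 (j : ℕ) : bb (j+1) 0 = 2 * bb j 0 + bb j 1 + (-(bb j 0)) := by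
  rw [bb_zero_rec]; ring

lemma bb_h4 (i j : ℕ) : (-(bb j 0)) * bb i 0 = (-(bb i 0)) * bb j 0 := by ring

lemma bb'_h1 (j k : ℕ) : bb' (j+1) (k+1) = bb' j k + 2 * bb' j (k+1) + bb' j (k+2) := by
  unfold bb'
  rw [bb_rec j k, bb_rec j (k+1)]
  ring

lemma bb'_h2 (j : ℕ) : bb' (j+1) 0 = 2 * bb' j 0 + bb' j 1 + 0 := by
  unfold bb'
  rw [bb_zero_rec, bb_rec j 0]
  ring

lemma bb'_vanish (i k : ℕ) (h : i < k) : bb' i k = 0 := by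
  unfold bb'
  rw [bb_vanish h, bb_vanish (by omega)]
  ring

lemma hankel_bb (i j N : ℕ) (h : i + j < N + 1) :
    ∑ k ∈ range (N+1), bb i k * bb j k = (catalan (i+j) : ℚ) := by
  rw [hankel_eval bb (fun j => -(bb j 0)) bb_rec bb_h2 (fun i k hk => bb_vanish hk) bb_h4 N j i h,
    bb_diag 0, mul_one, bb_catalan]

lemma hankel_bb' (i j N : ℕ) (h : i + j < N + 1) :
    ∑ k ∈ range (N+1), bb' i k * bb' j k = (catalan (i+j+1) : ℚ) := by
  rw [hankel_eval bb' (fun _ => 0) bb'_h1 bb'_h2 bb'_vanish (fun i j => by ring) N j i h]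
  have h0 : bb' 0 0 = 1 := by
    unfold bb'
    rw [bb_diag 0, bb_vanish (by omega)]
    ring
  have h1 : bb' (i+j) 0 = (catalan (i+j+1) : ℚ) := by
    unfold bb'
    rw [← bb_zero_rec, bb_catalan]
  rw [h0, h1, mul_one]

/-! ### Sum extension -/

lemma sum_extend (f : ℕ → ℚ) (n N : ℕ) (hnN : n ≤ N) (hf : ∀ k, n ≤ k → f k = 0) :
    ∑ k ∈ range n, f k = ∑ k ∈ range N, f k :=
  Finset.sum_subset (Finset.range_subset_range.2 hnN)
    (fun k _ hk => hf k (by simpa using hk))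

/-! ### Indicator sums -/

lemma sum_ind_eq (n a : ℕ) (ha : a < n) (f : ℕ → ℚ) :
    ∑ m ∈ range n, (if a = m then f m else 0) = f a := by
  rw [Finset.sum_ite_eq]
  simp [ha]

lemma sum_ind_succ (n a : ℕ) (ha : a < n) (f : ℕ → ℚ) :
    ∑ m ∈ range n, (if a = m + 1 then f m else 0) = if 1 ≤ a then f (a - 1) else 0 := by
  cases a with
  | zero => simp
  | succ t =>
    have hc : ∀ m : ℕ, ((t + 1 = m + 1) = (t = m)) := fun m => by
      simp [Nat.succ_inj]
    simp only [hc]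
    rw [sum_ind_eq n t (by omega) f]
    simp

/-! ### Matrices -/

noncomputable def Amat (n : ℕ) : Matrix (Fin n) (Fin n) ℚ :=
  Matrix.of fun i k => bb i k

def rfun (a b : ℕ) : ℚ := (if a = b then 1 else 0) + (if a = b+1 then 1 else 0)

noncomputable def lfun (a b : ℕ) : ℚ := (if a = b then 1 else 0)
  + (if a = b+1 then (Nat.fib (2*b+1) : ℚ)/(Nat.fib (2*b+3)) else 0)

noncomputable def ufun (a b : ℕ) : ℚ :=
  (if a = b then (Nat.fib (2*a+3) : ℚ)/(Nat.fib (2*a+1)) else 0)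
  + (if b = a+1 then 1 else 0)

def Rmat (n : ℕ) : Matrix (Fin n) (Fin n) ℚ := Matrix.of fun l k => rfun l k

noncomputable def Lmat (n : ℕ) : Matrix (Fin n) (Fin n) ℚ := Matrix.of fun k l => lfun k l

noncomputable def Umat (n : ℕ) : Matrix (Fin n) (Fin n) ℚ := Matrix.of fun k l => ufun k l

lemma fib_q_ne_zero (m : ℕ) : ((Nat.fib (m+1) : ℚ)) ≠ 0 := by
  have h := Nat.fib_pos.2 (show 0 < m + 1 by omega)
  exact_mod_cast h.ne'

-- B = A * R entrywise value
lemma AR_apply (n : ℕ) (i k : Fin n) : (Amat n * Rmat n) i k = bb' i k := by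
  rw [Matrix.mul_apply]
  have : ∀ m : Fin n, Amat n i m * Rmat n m k
      = (if (m:ℕ) = (k:ℕ) then bb i m else 0) + (if (m:ℕ) = (k:ℕ)+1 then bb i m else 0) := by
    intro m
    simp only [Amat, Rmat, rfun, Matrix.of_apply]
    split_ifs <;> ring
  rw [Finset.sum_congr rfl (fun m _ => this m)]
  rw [Finset.sum_add_distrib]
  have e1 : ∑ m : Fin n, (if (m:ℕ) = (k:ℕ) then bb i m else 0) = bb i k := by
    rw [Fin.sum_univ_eq_sum_range (fun m => if m = (k:ℕ) then bb i m else 0) n,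
      Finset.sum_ite_eq']
    simp [Finset.mem_range, k.isLt]
  have e2 : ∑ m : Fin n, (if (m:ℕ) = (k:ℕ)+1 then bb i m else 0) = bb i ((k:ℕ)+1) := by
    rw [Fin.sum_univ_eq_sum_range (fun m => if m = (k:ℕ)+1 then bb i m else 0) n]
    rw [Finset.sum_ite_eq']
    by_cases hk : (k:ℕ)+1 < n
    · simp [Finset.mem_range, hk]
    · rw [if_neg (show ¬((k:ℕ)+1 ∈ range n) from by simp [Finset.mem_range]; omega)]
      rw [bb_vanish (show (i:ℕ) < (k:ℕ)+1 by omega)]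
  rw [e1, e2]
  rfl

-- The Hankel matrix entries
lemma AAT_apply (n : ℕ) (i j : Fin n) :
    (Amat n * (Amat n)ᵀ) i j = (catalan ((i:ℕ)+(j:ℕ)) : ℚ) := by
  rw [Matrix.mul_apply]
  simp only [Matrix.transpose_apply, Amat, Matrix.of_apply]
  rw [Fin.sum_univ_eq_sum_range (fun k => bb i k * bb j k) n]
  set N := (i:ℕ) + (j:ℕ) + n
  have hext : ∑ k ∈ range n, bb i k * bb j k = ∑ k ∈ range (N+1), bb i k * bb j k := by
    apply sum_extend _ _ _ (by omega)
    intro k hk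
    rw [bb_vanish (show (i:ℕ) < k by omega), zero_mul]
  rw [hext, hankel_bb i j N (by omega)]

lemma BBT_apply (n : ℕ) (i j : Fin n) :
    ((Amat n * Rmat n) * (Amat n * Rmat n)ᵀ) i j = (catalan ((i:ℕ)+(j:ℕ)+1) : ℚ) := by
  rw [Matrix.mul_apply]
  have hentry : ∀ k : Fin n, (Amat n * Rmat n) i k * ((Amat n * Rmat n)ᵀ) k j
      = bb' i k * bb' j k := by
    intro k
    rw [Matrix.transpose_apply, AR_apply, AR_apply]
  rw [Finset.sum_congr rfl (fun k _ => hentry k)]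
  rw [Fin.sum_univ_eq_sum_range (fun k => bb' i k * bb' j k) n]
  set N := (i:ℕ) + (j:ℕ) + n
  have hext : ∑ k ∈ range n, bb' i k * bb' j k = ∑ k ∈ range (N+1), bb' i k * bb' j k := by
    apply sum_extend _ _ _ (by omega)
    intro k hk
    rw [bb'_vanish i k (show (i:ℕ) < k by omega), zero_mul]
  rw [hext, hankel_bb' i j N (by omega)]

-- determinant of A
lemma Amat_det (n : ℕ) : (Amat n).det = 1 := by
  rw [Matrix.det_of_lowerTriangular (Amat n)
    (fun i j h => bb_vanish (show (i:ℕ) < (j:ℕ) from h))]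
  have : ∀ i : Fin n, Amat n i i = 1 := fun i => bb_diag i
  rw [Finset.prod_congr rfl (fun i _ => this i)]
  exact Finset.prod_const_one

lemma Lmat_det (n : ℕ) : (Lmat n).det = 1 := by
  rw [Matrix.det_of_lowerTriangular (Lmat n)
    (fun i j h => by
      have hij : (i:ℕ) < (j:ℕ) := h
      simp only [Lmat, lfun, Matrix.of_apply]
      rw [if_neg (by omega), if_neg (by omega), add_zero])]
  have : ∀ i : Fin n, Lmat n i i = 1 := fun i => by
    simp only [Lmat, lfun, Matrix.of_apply]
    rw [if_neg (show ¬((i:ℕ) = (i:ℕ)+1) by omega)]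
    simp
  rw [Finset.prod_congr rfl (fun i _ => this i)]
  exact Finset.prod_const_one

lemma fib_prod (n : ℕ) :
    ∏ k ∈ range n, ((Nat.fib (2*k+3) : ℚ)/(Nat.fib (2*k+1))) = (Nat.fib (2*n+1) : ℚ) := by
  induction n with
  | zero => simp
  | succ m ih =>
    rw [Finset.prod_range_succ, ih]
    have hne := fib_q_ne_zero (2*m)
    rw [show 2*(m+1)+1 = 2*m+3 from by ring]
    field_simp

lemma Umat_det (n : ℕ) : (Umat n).det = (Nat.fib (2*n+1) : ℚ) := by
  rw [Matrix.det_of_upperTriangular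
    (show (Umat n).BlockTriangular id from fun i j h => by
      have hij : (j:ℕ) < (i:ℕ) := h
      simp only [Umat, ufun, Matrix.of_apply]
      rw [if_neg (by omega), if_neg (by omega), add_zero])]
  have : ∀ i : Fin n, Umat n i i = (Nat.fib (2*(i:ℕ)+3) : ℚ)/(Nat.fib (2*(i:ℕ)+1)) := fun i => by
    simp only [Umat, ufun, Matrix.of_apply]
    rw [if_neg (show ¬((i:ℕ) = (i:ℕ)+1) by omega)]
    simp
  rw [Finset.prod_congr rfl (fun i _ => this i),
    Fin.prod_univ_eq_prod_range (fun k => (Nat.fib (2*k+3) : ℚ)/(Nat.fib (2*k+1))) n]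
  exact fib_prod n

lemma RRT_apply (n : ℕ) (k l : Fin n) :
    (Rmat n * (Rmat n)ᵀ) k l
      = rfun (l:ℕ) (k:ℕ) + (if 1 ≤ (k:ℕ) then rfun (l:ℕ) ((k:ℕ)-1) else 0) := by
  rw [Matrix.mul_apply]
  have hpt : ∀ m : Fin n, Rmat n k m * (Rmat n)ᵀ m l
      = (if (k:ℕ) = (m:ℕ) then rfun (l:ℕ) (m:ℕ) else 0)
        + (if (k:ℕ) = (m:ℕ)+1 then rfun (l:ℕ) (m:ℕ) else 0) := by
    intro m
    simp only [Rmat, Matrix.of_apply, Matrix.transpose_apply, rfun]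
    split_ifs <;> ring
  rw [Finset.sum_congr rfl (fun m _ => hpt m), Finset.sum_add_distrib]
  rw [Fin.sum_univ_eq_sum_range (fun m => if (k:ℕ) = m then rfun (l:ℕ) m else 0) n,
      Fin.sum_univ_eq_sum_range (fun m => if (k:ℕ) = m+1 then rfun (l:ℕ) m else 0) n,
      sum_ind_eq n k k.isLt, sum_ind_succ n k k.isLt]

lemma LU_apply (n : ℕ) (k l : Fin n) :
    (Lmat n * Umat n) k l
      = ufun (k:ℕ) (l:ℕ)
        + (if 1 ≤ (k:ℕ) then
            ((Nat.fib (2*((k:ℕ)-1)+1) : ℚ)/(Nat.fib (2*((k:ℕ)-1)+3))) * ufun ((k:ℕ)-1) (l:ℕ)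
          else 0) := by
  rw [Matrix.mul_apply]
  have hpt : ∀ m : Fin n, Lmat n k m * Umat n m l
      = (if (k:ℕ) = (m:ℕ) then ufun (m:ℕ) (l:ℕ) else 0)
        + (if (k:ℕ) = (m:ℕ)+1 then
            ((Nat.fib (2*(m:ℕ)+1) : ℚ)/(Nat.fib (2*(m:ℕ)+3))) * ufun (m:ℕ) (l:ℕ) else 0) := by
    intro m
    simp only [Lmat, lfun, Matrix.of_apply, Umat]
    split_ifs <;> ring
  rw [Finset.sum_congr rfl (fun m _ => hpt m), Finset.sum_add_distrib]
  rw [Fin.sum_univ_eq_sum_range (fun m => if (k:ℕ) = m then ufun m (l:ℕ) else 0) n,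
      Fin.sum_univ_eq_sum_range (fun m =>
        if (k:ℕ) = m+1 then ((Nat.fib (2*m+1) : ℚ)/(Nat.fib (2*m+3))) * ufun m (l:ℕ) else 0) n,
      sum_ind_eq n k k.isLt, sum_ind_succ n k k.isLt]

lemma fib_id (t : ℕ) : (Nat.fib (2*t+5) : ℚ) + Nat.fib (2*t+1) = 3 * Nat.fib (2*t+3) := by
  have h1 : Nat.fib (2*t+5) = Nat.fib (2*t+3) + Nat.fib (2*t+4) := by
    rw [show 2*t+5 = (2*t+3)+2 from by ring]
    exact Nat.fib_add_two
  have h2 : Nat.fib (2*t+4) = Nat.fib (2*t+2) + Nat.fib (2*t+3) := by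
    rw [show 2*t+4 = (2*t+2)+2 from by ring]
    exact Nat.fib_add_two
  have h3 : Nat.fib (2*t+3) = Nat.fib (2*t+1) + Nat.fib (2*t+2) := by
    rw [show 2*t+3 = (2*t+1)+2 from by ring]
    exact Nat.fib_add_two
  have : Nat.fib (2*t+5) + Nat.fib (2*t+1) = 3 * Nat.fib (2*t+3) := by omega
  exact_mod_cast this

lemma T_eq_LU (n : ℕ) :
    (1 : Matrix (Fin n) (Fin n) ℚ) + Rmat n * (Rmat n)ᵀ = Lmat n * Umat n := by
  ext k l
  rw [Matrix.add_apply, Matrix.one_apply, RRT_apply, LU_apply]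
  have hkl : ((k = l)) ↔ ((k:ℕ) = (l:ℕ)) := Fin.ext_iff
  rw [if_congr hkl rfl rfl]
  generalize (k:ℕ) = a
  generalize (l:ℕ) = b
  have hf1 : (Nat.fib 1 : ℚ) = 1 := by norm_num
  have hf3 : (Nat.fib 3 : ℚ) = 2 := by norm_num [Nat.fib]
  cases a with
  | zero =>
    simp only [rfun, ufun, Nat.lt_irrefl, if_neg (by omega : ¬(1:ℕ) ≤ 0)]
    split_ifs <;> first
      | (exfalso; omega)
      | (norm_num [hf1, hf3])
  | succ t =>
    simp only [rfun, ufun, if_pos (by omega : (1:ℕ) ≤ t+1), Nat.add_sub_cancel,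
      show 2*(t+1)+3 = 2*t+5 from by ring, show 2*(t+1)+1 = 2*t+3 from by ring]
    have hne1 : ((Nat.fib (2*t+1)):ℚ) ≠ 0 := fib_q_ne_zero (2*t)
    have hne3 : ((Nat.fib (2*t+3)):ℚ) ≠ 0 := by
      have := fib_q_ne_zero (2*t+2)
      rwa [show 2*t+2+1 = 2*t+3 from by ring] at this
    have hid := fib_id t
    split_ifs
    all_goals try (exfalso; omega)
    all_goals try norm_num
    all_goals (rw [← add_div, eq_div_iff hne3]; linear_combination -hid)

theorem catalan_sum_matrix_det (n : ℕ) (hn : 0 < n) :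
    (Matrix.det (fun i j : Fin n =>
      (catalan ((i : ℕ) + j) : ℚ) + catalan ((i : ℕ) + j + 1))) = Nat.fib (2 * n + 1) := by
  have hM : (fun i j : Fin n => (catalan ((i:ℕ) + j) : ℚ) + catalan ((i:ℕ) + j + 1))
      = Amat n * (Amat n)ᵀ + (Amat n * Rmat n) * (Amat n * Rmat n)ᵀ := by
    ext i j
    rw [Matrix.add_apply, AAT_apply, BBT_apply]
  rw [show (Matrix.det (fun i j : Fin n =>
      (catalan ((i:ℕ) + j) : ℚ) + catalan ((i:ℕ) + j + 1)))
    = Matrix.det (Amat n * (Amat n)ᵀ + (Amat n * Rmat n) * (Amat n * Rmat n)ᵀ) from by rw [hM]]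
  have hfact : Amat n * (Amat n)ᵀ + (Amat n * Rmat n) * (Amat n * Rmat n)ᵀ
      = Amat n * (((1 : Matrix (Fin n) (Fin n) ℚ) + Rmat n * (Rmat n)ᵀ) * (Amat n)ᵀ) := by
    rw [Matrix.transpose_mul, Matrix.add_mul, Matrix.one_mul, Matrix.mul_add]
    simp only [Matrix.mul_assoc]
  rw [hfact, T_eq_LU, Matrix.det_mul, Matrix.det_mul, Matrix.det_mul, Matrix.det_transpose,
    Amat_det, Lmat_det, Umat_det]
  ring
end

section
/- Let u be a real (or formal) variable with u ≠ 1, u ≠ -1, and set x = -u/(1+u)². Then for every k ≥ 0, Σ_{r=0}^{k} binom(2k-r, r)·x^r = (1 - u^{2k+1}) / ((1-u)·(1+u)^{2k}). -/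
lemma rec_auxA (x : ℝ) (k : ℕ) :
    ∑ r ∈ Finset.range (k + 2), ((2 * k + 2 - r).choose r : ℝ) * x ^ r =
      (∑ r ∈ Finset.range (k + 1), ((2 * k + 1 - r).choose r : ℝ) * x ^ r) +
      x * ∑ r ∈ Finset.range (k + 1), ((2 * k - r).choose r : ℝ) * x ^ r := by
  rw [Finset.sum_range_succ']
  have e1 : ∀ r ∈ Finset.range (k + 1),
      ((2 * k + 2 - (r + 1)).choose (r + 1) : ℝ) * x ^ (r + 1) =
      ((2 * k - r).choose r : ℝ) * x ^ (r + 1) +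
      ((2 * k - r).choose (r + 1) : ℝ) * x ^ (r + 1) := by
    intro r hr
    rw [Finset.mem_range] at hr
    have h : 2 * k + 2 - (r + 1) = (2 * k - r) + 1 := by omega
    rw [h, Nat.choose_succ_succ]
    push_cast
    ring
  rw [Finset.sum_congr rfl e1, Finset.sum_add_distrib]
  have e2 : ∑ r ∈ Finset.range (k + 1), ((2 * k - r).choose r : ℝ) * x ^ (r + 1)
      = x * ∑ r ∈ Finset.range (k + 1), ((2 * k - r).choose r : ℝ) * x ^ r := by
    rw [Finset.mul_sum]
    exact Finset.sum_congr rfl fun r _ => by ring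
  have e3 : ∑ r ∈ Finset.range (k + 1), ((2 * k - r).choose (r + 1) : ℝ) * x ^ (r + 1)
      = ∑ r ∈ Finset.range k, ((2 * k - r).choose (r + 1) : ℝ) * x ^ (r + 1) := by
    rw [Finset.sum_range_succ]
    have : (2 * k - k).choose (k + 1) = 0 := by
      apply Nat.choose_eq_zero_of_lt; omega
    rw [this]
    simp
  have e4 : ∑ r ∈ Finset.range (k + 1), ((2 * k + 1 - r).choose r : ℝ) * x ^ r
      = (∑ r ∈ Finset.range k, ((2 * k - r).choose (r + 1) : ℝ) * x ^ (r + 1)) + 1 := by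
    rw [Finset.sum_range_succ']
    simp only [Nat.succ_sub_succ_eq_sub]
    norm_num
  rw [e2, e3, e4]
  norm_num
  ring

lemma rec_auxB (x : ℝ) (k : ℕ) :
    ∑ r ∈ Finset.range (k + 2), ((2 * k + 3 - r).choose r : ℝ) * x ^ r =
      (∑ r ∈ Finset.range (k + 2), ((2 * k + 2 - r).choose r : ℝ) * x ^ r) +
      x * ∑ r ∈ Finset.range (k + 1), ((2 * k + 1 - r).choose r : ℝ) * x ^ r := by
  rw [Finset.sum_range_succ']
  have e1 : ∀ r ∈ Finset.range (k + 1),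
      ((2 * k + 3 - (r + 1)).choose (r + 1) : ℝ) * x ^ (r + 1) =
      ((2 * k + 1 - r).choose r : ℝ) * x ^ (r + 1) +
      ((2 * k + 1 - r).choose (r + 1) : ℝ) * x ^ (r + 1) := by
    intro r hr
    rw [Finset.mem_range] at hr
    have h : 2 * k + 3 - (r + 1) = (2 * k + 1 - r) + 1 := by omega
    rw [h, Nat.choose_succ_succ]
    push_cast
    ring
  rw [Finset.sum_congr rfl e1, Finset.sum_add_distrib]
  have e2 : ∑ r ∈ Finset.range (k + 1), ((2 * k + 1 - r).choose r : ℝ) * x ^ (r + 1)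
      = x * ∑ r ∈ Finset.range (k + 1), ((2 * k + 1 - r).choose r : ℝ) * x ^ r := by
    rw [Finset.mul_sum]
    exact Finset.sum_congr rfl fun r _ => by ring
  have e4 : ∑ r ∈ Finset.range (k + 2), ((2 * k + 2 - r).choose r : ℝ) * x ^ r
      = (∑ r ∈ Finset.range (k + 1), ((2 * k + 1 - r).choose (r + 1) : ℝ) * x ^ (r + 1)) + 1 := by
    rw [Finset.sum_range_succ']
    simp only [Nat.succ_sub_succ_eq_sub]
    norm_num
  rw [e2, e4]
  norm_num
  ring

theorem g_closed_form (u : ℝ) (hu1 : u ≠ 1) (hu2 : u ≠ -1) (x : ℝ)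
    (hx : x = -u / (1 + u) ^ 2) (k : ℕ) :
    ∑ r ∈ Finset.range (k + 1), ((2 * k - r).choose r : ℝ) * x ^ r =
      (1 - u ^ (2 * k + 1)) / ((1 - u) * (1 + u) ^ (2 * k)) := by
  have h1 : (1 : ℝ) - u ≠ 0 := fun h => hu1 (by linarith)
  have h2 : (1 : ℝ) + u ≠ 0 := fun h => hu2 (by linarith)
  suffices h : (∑ r ∈ Finset.range (k + 1), ((2 * k - r).choose r : ℝ) * x ^ r =
      (1 - u ^ (2 * k + 1)) / ((1 - u) * (1 + u) ^ (2 * k))) ∧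
      (∑ r ∈ Finset.range (k + 1), ((2 * k + 1 - r).choose r : ℝ) * x ^ r =
      (1 - u ^ (2 * k + 2)) / ((1 - u) * (1 + u) ^ (2 * k + 1))) from h.1
  induction k with
  | zero =>
    constructor <;> simp <;> field_simp <;> ring
  | succ k ih =>
    obtain ⟨ihA, ihB⟩ := ih
    have hk2 : 2 * (k + 1) = 2 * k + 2 := by ring
    simp only [hk2]
    have recA := rec_auxA x k
    have recB := rec_auxB x k
    constructor
    · rw [recA, ihA, ihB, hx]
      field_simp
      ring
    · simp only [show 2 * k + 2 + 1 = 2 * k + 3 from by omega]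
      rw [recB, recA, ihA, ihB, hx]
      field_simp
      ring
end

section
/- Let x = -u/(1+u)². For k, j ≥ 1, the polynomial F(k,j) = (1/(j(2j-1)))·binom(2j, j-k)·Σ_{r=0}^{k} (1/(2k-r))·binom(2k-r,r)·(r·j + 2j·k² - j·k - 2r·k² + 2k³ - k²)·x^r satisfies, under this substitution, F(k,j) = (1-u^{2k})·(binom(2j, j-k)/(2j(2j-1)))·(2k² - j)/((1-u)(1+u)^{2k-1}) + (1+u^{2k})·(binom(2j, j-k)·k)/(2j·(1+u)^{2k}). -/
/-- `Ffun k i x` is the polynomial `F(k,i)` evaluated at the real number `x`: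
`F(k,i) = (1/(i(2i-1)))·binom(2i, i-k)·Σ_{r=0}^{k} (1/(2k-r))·binom(2k-r, r)·
  (r·i + 2i·k² - i·k - 2r·k² + 2k³ - k²)·x^r`,
with the convention `binom(2i, i-k) = 0` for `k > i`. -/
noncomputable def Ffun (k i : ℕ) (x : ℝ) : ℝ :=
  (1 / ((i : ℝ) * (2 * (i : ℝ) - 1))) *
    (if k ≤ i then ((2 * i).choose (i - k) : ℝ) else 0) *
    ∑ r ∈ Finset.range (k + 1),
      (1 / ((2 * k - r : ℕ) : ℝ)) * (((2 * k - r).choose r : ℝ)) *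
        ((r : ℝ) * i + 2 * i * (k : ℝ) ^ 2 - (i : ℝ) * k - 2 * r * (k : ℝ) ^ 2
          + 2 * (k : ℝ) ^ 3 - (k : ℝ) ^ 2) * x ^ r

/-- `gfun k x = Σ_{r=0}^{k} binom(2k-r, r)·x^r`. -/
noncomputable def gfun (k : ℕ) (x : ℝ) : ℝ :=
  ∑ r ∈ Finset.range (k + 1), ((2 * k - r).choose r : ℝ) * x ^ r

noncomputable def hfun (k : ℕ) (x : ℝ) : ℝ :=
  ∑ r ∈ Finset.range (k + 1), ((2 * k + 1 - r).choose r : ℝ) * x ^ r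

lemma gfun_succ (k : ℕ) (x : ℝ) : gfun (k + 1) x = x * gfun k x + hfun k x := by
  rw [gfun, Finset.sum_range_succ']
  have h0 : ((2 * (k+1) - 0).choose 0 : ℝ) * x ^ 0 = 1 := by simp
  rw [h0]
  have hterm : ∀ i ∈ Finset.range (k+1),
      ((2 * (k+1) - (i+1)).choose (i+1) : ℝ) * x ^ (i+1)
      = ((2*k - i).choose i : ℝ) * x ^ (i+1) + ((2*k - i).choose (i+1) : ℝ) * x ^ (i+1) := by
    intro i hi
    have : 2 * (k+1) - (i+1) = (2*k - i) + 1 := by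
      have := Finset.mem_range.mp hi; omega
    rw [this, Nat.choose_succ_succ, Nat.cast_add, add_mul]
  rw [Finset.sum_congr rfl hterm, Finset.sum_add_distrib]
  have h1 : ∑ i ∈ Finset.range (k+1), ((2*k - i).choose i : ℝ) * x ^ (i+1)
      = x * gfun k x := by
    rw [gfun, Finset.mul_sum]
    exact Finset.sum_congr rfl (fun i _ => by ring)
  have h2 : (∑ i ∈ Finset.range (k+1), ((2*k - i).choose (i+1) : ℝ) * x ^ (i+1)) + 1
      = hfun k x := by
    have hz : ((2*k - k).choose (k+1) : ℝ) * x ^ (k+1) = 0 := by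
      rw [Nat.choose_eq_zero_of_lt (by omega)]; simp
    rw [Finset.sum_range_succ, hz, add_zero]
    conv_rhs => rw [hfun, Finset.sum_range_succ']
    congr 1
    · exact Finset.sum_congr rfl (fun i _ => by congr 3; omega)
    · simp
  rw [h1, add_assoc, h2]

lemma hfun_succ (k : ℕ) (x : ℝ) : hfun (k + 1) x = x * hfun k x + gfun (k+1) x := by
  rw [hfun, Finset.sum_range_succ']
  have h0 : ((2 * (k+1) + 1 - 0).choose 0 : ℝ) * x ^ 0 = 1 := by simp
  rw [h0]
  have hterm : ∀ i ∈ Finset.range (k+1),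
      ((2 * (k+1) + 1 - (i+1)).choose (i+1) : ℝ) * x ^ (i+1)
      = ((2*k + 1 - i).choose i : ℝ) * x ^ (i+1) + ((2*k + 1 - i).choose (i+1) : ℝ) * x ^ (i+1) := by
    intro i hi
    have : 2 * (k+1) + 1 - (i+1) = (2*k + 1 - i) + 1 := by
      have := Finset.mem_range.mp hi; omega
    rw [this, Nat.choose_succ_succ, Nat.cast_add, add_mul]
  rw [Finset.sum_congr rfl hterm, Finset.sum_add_distrib]
  have h1 : ∑ i ∈ Finset.range (k+1), ((2*k + 1 - i).choose i : ℝ) * x ^ (i+1)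
      = x * hfun k x := by
    rw [hfun, Finset.mul_sum]
    exact Finset.sum_congr rfl (fun i _ => by ring)
  have h2 : (∑ i ∈ Finset.range (k+1), ((2*k + 1 - i).choose (i+1) : ℝ) * x ^ (i+1)) + 1
      = gfun (k+1) x := by
    conv_rhs => rw [gfun, Finset.sum_range_succ']
    congr 1
    · exact Finset.sum_congr rfl (fun i _ => by congr 3; omega)
    · simp
  rw [h1, add_assoc, h2]

lemma gh_closed (u : ℝ) (h1 : (1:ℝ) - u ≠ 0) (h2 : (1:ℝ) + u ≠ 0) (k : ℕ) :
    gfun k (-u / (1+u)^2) * ((1 - u) * (1+u)^(2*k)) = 1 - u^(2*k+1) ∧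
    hfun k (-u / (1+u)^2) * ((1 - u) * (1+u)^(2*k+1)) = 1 - u^(2*k+2) := by
  induction k with
  | zero =>
    refine ⟨?_, ?_⟩
    · simp [gfun]
    · simp [hfun]; ring
  | succ k ih =>
    obtain ⟨ihg, ihh⟩ := ih
    have hx : (-u / (1+u)^2) * (1+u)^2 = -u := by field_simp
    have hg : gfun (k+1) (-u / (1+u)^2) * ((1 - u) * (1+u)^(2*(k+1))) = 1 - u^(2*(k+1)+1) := by
      rw [gfun_succ]
      have e1 : (2*(k+1)) = 2*k + 2 := by ring
      rw [e1, pow_add]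
      linear_combination (-u) * ihg + (1+u) * ihh +
        gfun k (-u/(1+u)^2) * ((1-u) * (1+u)^(2*k)) * hx
    refine ⟨hg, ?_⟩
    rw [hfun_succ]
    have e1 : (2*(k+1)+1) = (2*(k+1)) + 1 := rfl
    have e2 : (2*(k+1)) = 2*k + 2 := by ring
    rw [e1, e2, pow_add, pow_add]
    linear_combination (-u) * ihh + (1+u) * hg +
      hfun k (-u/(1+u)^2) * ((1-u) * (1+u)^(2*k+1)) * hx

lemma ratio_sum (m : ℕ) (x : ℝ) :
    ∑ r ∈ Finset.range (m + 2),
      ((r : ℝ) / ((2 * (m+1) - r : ℕ) : ℝ)) * ((2 * (m+1) - r).choose r : ℝ) * x ^ r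
    = x * gfun m x := by
  rw [Finset.sum_range_succ']
  have h0 : ((0:ℕ) : ℝ) / ((2 * (m+1) - 0 : ℕ) : ℝ) * ((2 * (m+1) - 0).choose 0 : ℝ) * x ^ 0 = 0 := by
    simp
  rw [h0, add_zero]
  rw [gfun, Finset.mul_sum]
  apply Finset.sum_congr rfl
  intro s hs
  have hs' : s ≤ m := Nat.lt_succ_iff.mp (Finset.mem_range.mp hs)
  obtain ⟨n, hn⟩ : ∃ n, 2*m - s = n := ⟨_, rfl⟩
  have e1 : 2 * (m+1) - (s+1) = n + 1 := by omega
  rw [e1, hn]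
  have hkey : (n+1) * n.choose s = (n+1).choose (s+1) * (s+1) := Nat.add_one_mul_choose_eq n s
  have hcast : ((n:ℝ)+1) * (n.choose s : ℝ) = ((n+1).choose (s+1) : ℝ) * ((s:ℝ)+1) := by
    exact_mod_cast hkey
  have hne : ((n:ℝ)+1) ≠ 0 := by positivity
  push_cast
  field_simp
  linear_combination (-(x^(s+1))) * hcast

lemma key_sum (k j : ℕ) (hk : 1 ≤ k) (x : ℝ) :
    (∑ r ∈ Finset.range (k + 1),
      (1 / ((2 * k - r : ℕ) : ℝ)) * (((2 * k - r).choose r : ℝ)) *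
        ((r : ℝ) * j + 2 * j * (k : ℝ) ^ 2 - (j : ℝ) * k - 2 * r * (k : ℝ) ^ 2
          + 2 * (k : ℝ) ^ 3 - (k : ℝ) ^ 2) * x ^ r)
    = ((2*(k:ℝ)-1) * ((j:ℝ)+(k:ℝ)) / 2) * gfun k x
      + ((j:ℝ) - 2*(k:ℝ)^2 + (2*(k:ℝ)-1)*((j:ℝ)+(k:ℝ))/2) * (x * gfun (k-1) x) := by
  obtain ⟨m, rfl⟩ : ∃ m, k = m + 1 := ⟨k - 1, by omega⟩
  have step : ∀ r ∈ Finset.range (m + 2),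
      (1 / ((2 * (m+1) - r : ℕ) : ℝ)) * (((2 * (m+1) - r).choose r : ℝ)) *
        ((r : ℝ) * j + 2 * j * ((m+1 : ℕ) : ℝ) ^ 2 - (j : ℝ) * ((m+1:ℕ):ℝ)
          - 2 * r * ((m+1:ℕ):ℝ) ^ 2 + 2 * ((m+1:ℕ):ℝ) ^ 3 - ((m+1:ℕ):ℝ) ^ 2) * x ^ r
      = ((2*((m+1:ℕ):ℝ)-1) * ((j:ℝ)+((m+1:ℕ):ℝ)) / 2) * (((2 * (m+1) - r).choose r : ℝ) * x ^ r)
        + ((j:ℝ) - 2*((m+1:ℕ):ℝ)^2 + (2*((m+1:ℕ):ℝ)-1)*((j:ℝ)+((m+1:ℕ):ℝ))/2) *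
          (((r : ℝ) / ((2 * (m+1) - r : ℕ) : ℝ)) * ((2 * (m+1) - r).choose r : ℝ) * x ^ r) := by
    intro r hr
    have hr' : r ≤ m + 1 := Nat.lt_succ_iff.mp (Finset.mem_range.mp hr)
    have hle : r ≤ 2 * (m + 1) := by omega
    have hcast : ((2 * (m+1) - r : ℕ) : ℝ) = 2 * ((m:ℝ)+1) - (r:ℝ) := by
      push_cast [Nat.cast_sub hle]; ring
    have hne : ((2 * (m+1) - r : ℕ) : ℝ) ≠ 0 := by
      have h : 0 < 2 * (m+1) - r := by omega
      exact_mod_cast h.ne'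
    have hne' : 2 * ((m:ℝ)+1) - (r:ℝ) ≠ 0 := hcast ▸ hne
    rw [hcast]
    push_cast
    field_simp
    ring
  rw [Finset.sum_congr rfl step, Finset.sum_add_distrib]
  congr 1
  · rw [gfun, Finset.mul_sum]
  · simp only [Nat.add_sub_cancel]
    rw [← ratio_sum m x, Finset.mul_sum]

set_option maxHeartbeats 2000000 in
theorem F_closed_form_in_u (u : ℝ) (hu1 : u ≠ 1) (hu2 : u ≠ -1)
    (k j : ℕ) (hk : 1 ≤ k) (hj : 1 ≤ j) :
    Ffun k j (-u / (1 + u) ^ 2) =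
      (1 - u ^ (2 * k)) *
          ((if k ≤ j then ((2 * j).choose (j - k) : ℝ) else 0) / (2 * j * (2 * j - 1))) *
          ((2 * (k : ℝ) ^ 2 - j) / ((1 - u) * (1 + u) ^ (2 * k - 1))) +
        (1 + u ^ (2 * k)) *
          ((if k ≤ j then ((2 * j).choose (j - k) : ℝ) else 0) * k /
            (2 * j * (1 + u) ^ (2 * k))) := by
  have h1 : (1:ℝ) - u ≠ 0 := sub_ne_zero_of_ne (Ne.symm hu1)
  have h2 : (1:ℝ) + u ≠ 0 := by intro h; apply hu2; linarith
  rw [Ffun, key_sum k j hk]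
  have hgk := (gh_closed u h1 h2 k).1
  have hgk1 := (gh_closed u h1 h2 (k-1)).1
  obtain ⟨m, rfl⟩ : ∃ m, k = m + 1 := ⟨k - 1, by omega⟩
  simp only [Nat.add_sub_cancel] at hgk1 ⊢
  have hpow : (1+u)^(2*(m+1)) ≠ 0 := pow_ne_zero _ h2
  have hpow' : (1+u)^(2*m) ≠ 0 := pow_ne_zero _ h2
  have hgk' : gfun (m+1) (-u / (1+u)^2) = (1 - u^(2*(m+1)+1)) / ((1-u)*(1+u)^(2*(m+1))) := by
    rw [eq_div_iff (mul_ne_zero h1 hpow)]; exact hgk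
  have hgk1' : gfun m (-u / (1+u)^2) = (1 - u^(2*m+1)) / ((1-u)*(1+u)^(2*m)) := by
    rw [eq_div_iff (mul_ne_zero h1 hpow')]; exact hgk1
  rw [hgk', hgk1']
  have e : 2*(m+1) - 1 = 2*m+1 := by omega
  rw [e]
  generalize (if m + 1 ≤ j then ((2 * j).choose (j - (m+1)) : ℝ) else 0) = c
  have hj0 : (j:ℝ) ≠ 0 := by positivity
  have hj1 : 2*(j:ℝ) - 1 ≠ 0 := by
    have : (1:ℝ) ≤ (j:ℝ) := by exact_mod_cast hj
    intro h; nlinarith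
  push_cast
  field_simp
  have hj3 : (j:ℝ)*2 - 1 ≠ 0 := by intro h; apply hj1; linarith
  rw [mul_div_assoc, ← mul_div_assoc, div_eq_iff hj3]
  field_simp
  ring
end

section
/- For integers j ≥ k ≥ 1, all coefficients of F(k,j) are integers, i.e. (1/(j(2j-1)))·binom(2j,j-k)·(1/(2k-r))·binom(2k-r,r)·(rj + 2jk² - jk - 2rk² + 2k³ - k²) is an integer for every 0 ≤ r ≤ k. -/
/-- r-side absorption identity: `2k·C(2k-r, r) = (2k-r)·(C(2k-r, r) + C(2k-r-1, 2k-2r))`. -/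
lemma Rside_aux (k r : ℕ) (hk : 1 ≤ k) (hr : r ≤ k) :
    2 * (k : ℚ) * ((2 * k - r).choose r : ℚ)
      = ((2 * k - r : ℕ) : ℚ) *
        (((2 * k - r).choose r : ℚ) + ((2 * k - r - 1).choose (2 * k - 2 * r) : ℚ)) := by
  rcases r with _ | r
  · rw [show (2 * k - 0 - 1).choose (2 * k - 2 * 0) = 0 from
      Nat.choose_eq_zero_of_lt (by omega)]
    simp
  · have hs : (2 * k - (r + 1) - 1).choose (2 * k - 2 * (r + 1))
        = (2 * k - (r + 1) - 1).choose r := by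
      rw [← Nat.choose_symm (show r ≤ 2 * k - (r + 1) - 1 by omega)]
      congr 1
      omega
    have habs : (2 * k - (r + 1)) * ((2 * k - (r + 1) - 1).choose r)
        = (2 * k - (r + 1)).choose (r + 1) * (r + 1) := by
      have h := Nat.add_one_mul_choose_eq (2 * k - (r + 1) - 1) r
      rwa [show (2 * k - (r + 1) - 1 + 1) = 2 * k - (r + 1) by omega] at h
    have habsQ : ((2 * k - (r + 1) : ℕ) : ℚ) * ((2 * k - (r + 1) - 1).choose r : ℚ)
        = ((2 * k - (r + 1)).choose (r + 1) : ℚ) * ((r : ℚ) + 1) := by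
      exact_mod_cast habs
    have hc : ((2 * k - (r + 1) : ℕ) : ℚ) = 2 * (k : ℚ) - ((r : ℚ) + 1) := by
      push_cast [Nat.cast_sub (show r + 1 ≤ 2 * k by omega)]
      ring
    rw [hc] at habsQ
    rw [hs, hc]
    linear_combination - habsQ


/-- j-side identity 1: `(2k+1)(j-k)·C(2j, j-k) = 2j(2j-1)·(C(2j-2, j+k-1) - C(2j-2, j+k))`. -/
lemma Jside1_aux (j k : ℕ) (hk : 1 ≤ k) (hkj : k ≤ j) :
    (2 * (k : ℚ) + 1) * ((j : ℚ) - k) * ((2 * j).choose (j - k) : ℚ)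
      = 2 * (j : ℚ) * (2 * (j : ℚ) - 1) *
        (((2 * j - 2).choose (j + k - 1) : ℚ) - ((2 * j - 2).choose (j + k) : ℚ)) := by
  obtain ⟨a, rfl⟩ := Nat.exists_eq_add_of_le hkj
  rcases a with _ | _ | b
  · rw [show (2 * (k + 0) - 2).choose (k + 0 + k - 1) = 0 from
        Nat.choose_eq_zero_of_lt (by omega),
      show (2 * (k + 0) - 2).choose (k + 0 + k) = 0 from
        Nat.choose_eq_zero_of_lt (by omega)]
    push_cast
    ring
  · rw [show k + 1 - k = 1 by omega, show 2 * (k + 1) - 2 = 2 * k by omega,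
      show k + 1 + k - 1 = 2 * k by omega, show k + 1 + k = 2 * k + 1 by omega,
      Nat.choose_one_right, Nat.choose_self,
      show (2 * k).choose (2 * k + 1) = 0 from Nat.choose_eq_zero_of_lt (by omega)]
    push_cast
    ring
  · rw [show 2 * (k + (b + 2)) - 2 = 2 * k + 2 * b + 2 by omega,
      show k + (b + 2) - k = b + 2 by omega,
      show k + (b + 2) + k - 1 = 2 * k + b + 1 by omega,
      show k + (b + 2) + k = 2 * k + b + 2 by omega,
      show 2 * (k + (b + 2)) = 2 * k + 2 * b + 4 by omega]
    rw [show (2 * k + 2 * b + 2).choose (2 * k + b + 1) = (2 * k + 2 * b + 2).choose (b + 1) by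
        rw [← Nat.choose_symm (show b + 1 ≤ 2 * k + 2 * b + 2 by omega)]; congr 1; omega,
      show (2 * k + 2 * b + 2).choose (2 * k + b + 2) = (2 * k + 2 * b + 2).choose b by
        rw [← Nat.choose_symm (show b ≤ 2 * k + 2 * b + 2 by omega)]; congr 1; omega]
    have h1 : (2 * k + 2 * b + 4) * ((2 * k + 2 * b + 3).choose (b + 1))
        = (2 * k + 2 * b + 4).choose (b + 2) * (b + 2) := by
      have h := Nat.add_one_mul_choose_eq (2 * k + 2 * b + 3) (b + 1)
      rwa [show (2 * k + 2 * b + 3 + 1) = 2 * k + 2 * b + 4 by omega] at h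
    have h2 : (2 * k + 2 * b + 3) * ((2 * k + 2 * b + 2).choose b)
        = (2 * k + 2 * b + 3).choose (b + 1) * (b + 1) := by
      have h := Nat.add_one_mul_choose_eq (2 * k + 2 * b + 2) b
      rwa [show (2 * k + 2 * b + 2 + 1) = 2 * k + 2 * b + 3 by omega] at h
    have h3 : (2 * k + 2 * b + 2).choose (b + 1) * (2 * k + 2 * b + 3)
        = (2 * k + 2 * b + 3).choose (b + 1) * (2 * k + b + 2) := by
      have h := Nat.choose_mul_succ_eq (2 * k + 2 * b + 2) (b + 1)
      rwa [show 2 * k + 2 * b + 2 + 1 = 2 * k + 2 * b + 3 by omega,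
        show 2 * k + 2 * b + 3 - (b + 1) = 2 * k + b + 2 by omega] at h
    have H1 : (2 * (k : ℚ) + 2 * b + 4) * ((2 * k + 2 * b + 3).choose (b + 1) : ℚ)
        = ((2 * k + 2 * b + 4).choose (b + 2) : ℚ) * ((b : ℚ) + 2) := by exact_mod_cast h1
    have H2 : (2 * (k : ℚ) + 2 * b + 3) * ((2 * k + 2 * b + 2).choose b : ℚ)
        = ((2 * k + 2 * b + 3).choose (b + 1) : ℚ) * ((b : ℚ) + 1) := by exact_mod_cast h2
    have H3 : ((2 * k + 2 * b + 2).choose (b + 1) : ℚ) * (2 * (k : ℚ) + 2 * b + 3)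
        = ((2 * k + 2 * b + 3).choose (b + 1) : ℚ) * (2 * (k : ℚ) + b + 2) := by
      exact_mod_cast h3
    push_cast
    linear_combination (-(2 * (k : ℚ) + 1)) * H1 - (2 * (k : ℚ) + 2 * b + 4) * H3 +
      (2 * (k : ℚ) + 2 * b + 4) * H2


/-- j-side identity 2: `(j-2k²)·C(2j, j-k) = j(2j-1)·(2·C(2j-2, j+k-1) - C(2j-2, j-k) - C(2j-2, j+k))`. -/
lemma Jside2_aux (j k : ℕ) (hk : 1 ≤ k) (hkj : k ≤ j) :
    ((j : ℚ) - 2 * (k : ℚ) ^ 2) * ((2 * j).choose (j - k) : ℚ)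
      = (j : ℚ) * (2 * (j : ℚ) - 1) *
        (2 * ((2 * j - 2).choose (j + k - 1) : ℚ) - ((2 * j - 2).choose (j - k) : ℚ)
          - ((2 * j - 2).choose (j + k) : ℚ)) := by
  obtain ⟨a, rfl⟩ := Nat.exists_eq_add_of_le hkj
  rcases a with _ | _ | b
  · rw [show (2 * (k + 0) - 2).choose (k + 0 + k - 1) = 0 from
        Nat.choose_eq_zero_of_lt (by omega),
      show (2 * (k + 0) - 2).choose (k + 0 + k) = 0 from
        Nat.choose_eq_zero_of_lt (by omega),
      show k + 0 - k = 0 by omega, Nat.choose_zero_right,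
      show 2 * (k + 0) - 2 = 2 * (k - 1) by omega, Nat.choose_zero_right]
    push_cast [Nat.cast_sub hk]
    ring
  · rw [show k + 1 - k = 1 by omega, show 2 * (k + 1) - 2 = 2 * k by omega,
      show k + 1 + k - 1 = 2 * k by omega, show k + 1 + k = 2 * k + 1 by omega,
      Nat.choose_one_right, Nat.choose_one_right, Nat.choose_self,
      show (2 * k).choose (2 * k + 1) = 0 from Nat.choose_eq_zero_of_lt (by omega)]
    push_cast
    ring
  · rw [show 2 * (k + (b + 2)) - 2 = 2 * k + 2 * b + 2 by omega,
      show k + (b + 2) - k = b + 2 by omega,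
      show k + (b + 2) + k - 1 = 2 * k + b + 1 by omega,
      show k + (b + 2) + k = 2 * k + b + 2 by omega,
      show 2 * (k + (b + 2)) = 2 * k + 2 * b + 4 by omega]
    rw [show (2 * k + 2 * b + 2).choose (2 * k + b + 1) = (2 * k + 2 * b + 2).choose (b + 1) by
        rw [← Nat.choose_symm (show b + 1 ≤ 2 * k + 2 * b + 2 by omega)]; congr 1; omega,
      show (2 * k + 2 * b + 2).choose (2 * k + b + 2) = (2 * k + 2 * b + 2).choose b by
        rw [← Nat.choose_symm (show b ≤ 2 * k + 2 * b + 2 by omega)]; congr 1; omega]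
    have h1 : (2 * k + 2 * b + 4) * ((2 * k + 2 * b + 3).choose (b + 1))
        = (2 * k + 2 * b + 4).choose (b + 2) * (b + 2) := by
      have h := Nat.add_one_mul_choose_eq (2 * k + 2 * b + 3) (b + 1)
      rwa [show (2 * k + 2 * b + 3 + 1) = 2 * k + 2 * b + 4 by omega] at h
    have h2 : (2 * k + 2 * b + 3) * ((2 * k + 2 * b + 2).choose b)
        = (2 * k + 2 * b + 3).choose (b + 1) * (b + 1) := by
      have h := Nat.add_one_mul_choose_eq (2 * k + 2 * b + 2) b
      rwa [show (2 * k + 2 * b + 2 + 1) = 2 * k + 2 * b + 3 by omega] at h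
    have p2 : (2 * k + 2 * b + 3).choose (b + 1)
        = (2 * k + 2 * b + 2).choose b + (2 * k + 2 * b + 2).choose (b + 1) := by
      rw [show 2 * k + 2 * b + 3 = (2 * k + 2 * b + 2) + 1 by omega]
      exact Nat.choose_succ_succ _ _
    have p3 : (2 * k + 2 * b + 3).choose (b + 2)
        = (2 * k + 2 * b + 2).choose (b + 1) + (2 * k + 2 * b + 2).choose (b + 2) := by
      rw [show 2 * k + 2 * b + 3 = (2 * k + 2 * b + 2) + 1 by omega]
      exact Nat.choose_succ_succ _ _
    have p1 : (2 * k + 2 * b + 4).choose (b + 2)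
        = (2 * k + 2 * b + 3).choose (b + 1) + (2 * k + 2 * b + 3).choose (b + 2) := by
      rw [show 2 * k + 2 * b + 4 = (2 * k + 2 * b + 3) + 1 by omega]
      exact Nat.choose_succ_succ _ _
    have H1 : (2 * (k : ℚ) + 2 * b + 4) * ((2 * k + 2 * b + 3).choose (b + 1) : ℚ)
        = ((2 * k + 2 * b + 4).choose (b + 2) : ℚ) * ((b : ℚ) + 2) := by exact_mod_cast h1
    have H2 : (2 * (k : ℚ) + 2 * b + 3) * ((2 * k + 2 * b + 2).choose b : ℚ)
        = ((2 * k + 2 * b + 3).choose (b + 1) : ℚ) * ((b : ℚ) + 1) := by exact_mod_cast h2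
    have HA : ((2 * k + 2 * b + 4).choose (b + 2) : ℚ)
        = ((2 * k + 2 * b + 2).choose b : ℚ) + 2 * ((2 * k + 2 * b + 2).choose (b + 1) : ℚ)
          + ((2 * k + 2 * b + 2).choose (b + 2) : ℚ) := by
      have : (2 * k + 2 * b + 4).choose (b + 2)
          = (2 * k + 2 * b + 2).choose b + 2 * ((2 * k + 2 * b + 2).choose (b + 1))
            + (2 * k + 2 * b + 2).choose (b + 2) := by omega
      exact_mod_cast this
    have HB : ((2 * k + 2 * b + 3).choose (b + 1) : ℚ)
        = ((2 * k + 2 * b + 2).choose b : ℚ) + ((2 * k + 2 * b + 2).choose (b + 1) : ℚ) := by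
      exact_mod_cast p2
    push_cast
    linear_combination
      (-((4 * ((k : ℚ) + b + 2) - 2) - 2 * ((b : ℚ) + 1))) * H1
      + (4 * ((k : ℚ) + b + 2)) * H2
      + (8 * ((k : ℚ) + b + 2) ^ 2 - 4 * ((k : ℚ) + b + 2)) * HB
      - (((k : ℚ) + b + 2) * (2 * ((k : ℚ) + b + 2) - 1)) * HA


theorem F_coeff_integrality (j k : ℕ) (hk : 1 ≤ k) (hkj : k ≤ j) (r : ℕ) (hr : r ≤ k) :
    ∃ m : ℤ,
      (1 / ((j : ℚ) * (2 * j - 1))) * ((2 * j).choose (j - k) : ℚ) *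
          (1 / ((2 * k - r : ℕ) : ℚ)) * ((2 * k - r).choose r : ℚ) *
          ((r : ℚ) * j + 2 * j * (k : ℚ) ^ 2 - (j : ℚ) * k - 2 * r * (k : ℚ) ^ 2
            + 2 * (k : ℚ) ^ 3 - (k : ℚ) ^ 2) = (m : ℚ) := by
  refine ⟨(((2 * j - 2).choose (j + k - 1) : ℤ) - ((2 * j - 2).choose (j + k) : ℤ)) *
      (((2 * k - r).choose r : ℤ) + ((2 * k - r - 1).choose (2 * k - 2 * r) : ℤ)) -
      (2 * ((2 * j - 2).choose (j + k - 1) : ℤ) - ((2 * j - 2).choose (j - k) : ℤ)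
        - ((2 * j - 2).choose (j + k) : ℤ)) * ((2 * k - r).choose r : ℤ), ?_⟩
  have hJ1 := Jside1_aux j k hk hkj
  have hJ2 := Jside2_aux j k hk hkj
  have hR := Rside_aux k r hk hr
  have hj1 : 1 ≤ j := hk.trans hkj
  have hj0 : (j : ℚ) ≠ 0 := Nat.cast_ne_zero.mpr (by omega)
  have hjQ : (1 : ℚ) ≤ (j : ℚ) := by exact_mod_cast hj1
  have hj2 : 2 * (j : ℚ) - 1 ≠ 0 := by nlinarith
  have hkr0 : ((2 * k - r : ℕ) : ℚ) ≠ 0 := Nat.cast_ne_zero.mpr (by omega)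
  have hc : ((2 * k - r : ℕ) : ℚ) = 2 * (k : ℚ) - (r : ℚ) := by
    push_cast [Nat.cast_sub (show r ≤ 2 * k by omega)]
    ring
  have hkr0' : 2 * (k : ℚ) - (r : ℚ) ≠ 0 := hc ▸ hkr0
  rw [hc] at hR ⊢
  push_cast
  have hj2' : (j : ℚ) * 2 - 1 ≠ 0 := by linarith
  field_simp
  linear_combination
    ((k : ℚ) * ((2 * k - r).choose r : ℚ)) * hJ1
    + ((j : ℚ) * (2 * (j : ℚ) - 1) *
        (((2 * j - 2).choose (j + k - 1) : ℚ) - ((2 * j - 2).choose (j + k) : ℚ))) * hR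
    - ((2 * (k : ℚ) - (r : ℚ)) * ((2 * k - r).choose r : ℚ)) * hJ2
end
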